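/- arXiv:2201.02363 — 3 statements merged into one kernel-verified Lean document; each statement's English description precedes it below -/
import Mathlib

section
/- For any two non-negative functions μ, ν in L¹(ℝ²) each with integral equal to one, and any α in (0,1), the modified relative entropy H_α[μ|ν] := ∫ μ log(μ/(αμ+(1-α)ν)) satisfies ((1-α)²/2)·‖μ-ν‖²_{L¹} ≤ H_α[μ|ν] ≤ ((1-α)/α)·‖μ-ν‖_{L¹}. -/
/-!
Put `σ = α μ + (1 - α) ν`. This is again a probability density, it vanishes only where `μ` does,
`H_α[μ|ν]` is the relative entropy of `μ` with respect to `σ`, and `μ - σ = (1 - α) (μ - ν)`.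
The lower bound is therefore Pinsker's inequality for `μ` and `σ`, which follows from the
pointwise bound `3 (x - 1)² ≤ 2 (x + 2) (x log x - x + 1)` by integrating an AM-GM estimate.
The upper bound holds pointwise: `a log (a / s) ≤ (a / s) (a - s)` and `a / s ≤ 1 / α`.
-/

open MeasureTheory Real Set InformationTheory

lemma three_mul_sq_sub_one_le_klFun {x : ℝ} (hx : 0 ≤ x) :
    3 * (x - 1) ^ 2 ≤ 2 * (x + 2) * klFun x := by
  set g : ℝ → ℝ := fun x ↦ 2 * (x + 2) * klFun x - 3 * (x - 1) ^ 2
  set g' : ℝ → ℝ := fun x ↦ 2 * klFun x + 2 * (x + 2) * log x - 6 * (x - 1)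
  have hg' : ∀ x ≠ 0, HasDerivAt g (g' x) x := fun x hx ↦
    ((((hasDerivAt_id x).add_const 2).const_mul 2).mul (hasDerivAt_klFun hx) |>.sub
      ((((hasDerivAt_id x).sub_const 1).pow 2).const_mul 3)).congr_deriv (by simp [g']; ring)
  have hg'' : ∀ x ≠ 0, HasDerivAt g' (4 * log x + 4 / x - 4) x := fun x hx ↦
    (((hasDerivAt_klFun hx).const_mul 2).add
      ((((hasDerivAt_id x).add_const 2).const_mul 2).mul (hasDerivAt_log hx)) |>.sub
      (((hasDerivAt_id x).sub_const 1).const_mul 6)).congr_deriv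
      (by simp only [id]; field_simp; ring)
  have hconvex : ConvexOn ℝ (Ici 0) g := by
    refine convexOn_of_hasDerivWithinAt2_nonneg (convex_Ici 0) (by fun_prop)
      (fun x hx ↦ (hg' x ?_).hasDerivWithinAt) (fun x hx ↦ (hg'' x ?_).hasDerivWithinAt)
      fun x hx ↦ ?_
    all_goals rw [interior_Ici] at hx
    · exact hx.ne'
    · exact hx.ne'
    · have := one_sub_inv_le_log_of_pos hx
      rw [div_eq_mul_inv]
      linarith
  have hmin : IsMinOn g (Ici 0) 1 := by
    refine hconvex.isMinOn_of_rightDeriv_eq_zero (by simp) ?_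
    rw [((hg' 1 one_ne_zero).hasDerivWithinAt).derivWithin (uniqueDiffWithinAt_Ioi 1)]
    simp [g', klFun_one]
  have : g 1 ≤ g x := hmin (mem_Ici.mpr hx)
  simp only [g, klFun_one] at this
  linarith

lemma mul_klFun_div (a : ℝ) {b : ℝ} (hb : b ≠ 0) :
    b * klFun (a / b) = a * log (a / b) + b - a := by
  rw [klFun_apply]
  field_simp

lemma sub_le_mul_log_div {a b : ℝ} (ha : 0 ≤ a) (hb : 0 ≤ b) (hab : b = 0 → a = 0) :
    a - b ≤ a * log (a / b) := by
  rcases hb.eq_or_lt with rfl | hb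
  · simp [hab rfl]
  · have := mul_nonneg hb.le (klFun_nonneg (div_nonneg ha hb.le))
    rw [mul_klFun_div a hb.ne'] at this
    linarith

lemma three_mul_sq_sub_le_mul_log_div {a b : ℝ} (ha : 0 ≤ a) (hb : 0 ≤ b) (hab : b = 0 → a = 0) :
    3 * (a - b) ^ 2 ≤ 2 * (a + 2 * b) * (a * log (a / b) - a + b) := by
  rcases hb.eq_or_lt with rfl | hb
  · simp [hab rfl]
  · have key := mul_le_mul_of_nonneg_left
      (three_mul_sq_sub_one_le_klFun (div_nonneg ha hb.le)) (sq_nonneg b)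
    have hkl := mul_klFun_div a hb.ne'
    calc 3 * (a - b) ^ 2 = b ^ 2 * (3 * (a / b - 1) ^ 2) := by field_simp
      _ ≤ b ^ 2 * (2 * (a / b + 2) * klFun (a / b)) := key
      _ = 2 * (a + 2 * b) * (b * klFun (a / b)) := by field_simp
      _ = 2 * (a + 2 * b) * (a * log (a / b) - a + b) := by rw [hkl]; ring

/-- Pinsker's inequality for probability densities. -/
theorem sq_integral_abs_sub_le_two_mul_integral_mul_log_div {Ω : Type*} [MeasurableSpace Ω]
    {ρ : Measure Ω} {p q : Ω → ℝ} (hp0 : ∀ x, 0 ≤ p x) (hq0 : ∀ x, 0 ≤ q x)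
    (hpq : ∀ x, q x = 0 → p x = 0) (hp : Integrable p ρ) (hq : Integrable q ρ)
    (hp1 : ∫ x, p x ∂ρ = 1) (hq1 : ∫ x, q x ∂ρ = 1)
    (hlog : Integrable (fun x ↦ p x * log (p x / q x)) ρ) :
    (∫ x, |p x - q x| ∂ρ) ^ 2 ≤ 2 * ∫ x, p x * log (p x / q x) ∂ρ := by
  set T := ∫ x, |p x - q x| ∂ρ
  set t := T / 2 with ht_def
  have ht : 0 ≤ t := div_nonneg (integral_nonneg fun x ↦ abs_nonneg _) zero_le_two
  -- AM-GM applied to `3 (p - q)² ≤ 2 (p + 2q) G`, where `G = p log (p / q) - p + q ≥ 0`;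
  -- the weight `t = T / 2` makes the integrated inequality read `T² ≤ T² / 2 + ∫ p log (p / q)`.
  have hpoint : ∀ x, 2 * t * |p x - q x|
      ≤ 2 / 3 * t ^ 2 * (p x + 2 * q x) + (p x * log (p x / q x) - p x + q x) := fun x ↦ by
    have hG := sub_le_mul_log_div (hp0 x) (hq0 x) (hpq x)
    have h3 := three_mul_sq_sub_le_mul_log_div (hp0 x) (hq0 x) (hpq x)
    have hw : 0 ≤ p x + 2 * q x := by linarith [hp0 x, hq0 x]
    rw [← sq_abs] at h3
    nlinarith [sq_nonneg (2 / 3 * t ^ 2 * (p x + 2 * q x) - (p x * log (p x / q x) - p x + q x)),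
      abs_nonneg (p x - q x), mul_nonneg (mul_nonneg ht ht) hw]
  have hlhs : ∫ x, 2 * t * |p x - q x| ∂ρ = 2 * t * T := integral_const_mul _ _
  have hrhs : ∫ x, (2 / 3 * t ^ 2 * (p x + 2 * q x) + (p x * log (p x / q x) - p x + q x)) ∂ρ
      = 2 * t ^ 2 + ∫ x, p x * log (p x / q x) ∂ρ := by
    rw [integral_add (by fun_prop) (by fun_prop), integral_const_mul, integral_add hp (by fun_prop),
      integral_const_mul, integral_add (by fun_prop) hq, integral_sub hlog hp, hp1, hq1]
    ring
  have := integral_mono (by fun_prop) (by fun_prop) hpoint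
  rw [hlhs, hrhs, ht_def] at this
  linarith

lemma mul_log_div_mix_le {α a b : ℝ} (hα0 : 0 < α) (hα1 : α ≤ 1) (ha : 0 ≤ a) (hb : 0 ≤ b) :
    a * log (a / (α * a + (1 - α) * b)) ≤ (1 - α) / α * |a - b| := by
  have hrhs : 0 ≤ (1 - α) / α * |a - b| := by
    have : 0 ≤ 1 - α := by linarith
    positivity
  rcases ha.eq_or_lt with rfl | ha
  · simpa using hrhs
  set s := α * a + (1 - α) * b
  have has : α * a ≤ s := by nlinarith
  have hs : 0 < s := by nlinarith
  have hlog : a * log (a / s) ≤ a / s * (a - s) :=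
    calc a * log (a / s) ≤ a * (a / s - 1) :=
          mul_le_mul_of_nonneg_left (log_le_sub_one_of_pos (div_pos ha hs)) ha.le
      _ = a / s * (a - s) := by field_simp
  have hdiff : a - s = (1 - α) * (a - b) := by ring
  rcases le_total a b with hab | hba
  · have : a / s * (a - s) ≤ 0 :=
      mul_nonpos_of_nonneg_of_nonpos (by positivity) (by nlinarith)
    linarith
  · have hratio : a / s ≤ 1 / α := by rw [div_le_div_iff₀ hs hα0]; linarith
    calc a * log (a / s) ≤ a / s * (a - s) := hlog
      _ ≤ 1 / α * (a - s) := mul_le_mul_of_nonneg_right hratio (by nlinarith)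
      _ = (1 - α) / α * |a - b| := by rw [abs_of_nonneg (sub_nonneg.2 hba), hdiff]; ring

/-- Csiszár–Kullback-type bounds for the modified relative entropy
`H_α[μ|ν] = ∫ μ log(μ/(αμ+(1-α)ν))`. -/
theorem stmt0 (μ ν : ℝ × ℝ → ℝ) (α : ℝ) (hα : α ∈ Set.Ioo (0 : ℝ) 1)
    (hμ0 : ∀ u, 0 ≤ μ u) (hν0 : ∀ u, 0 ≤ ν u)
    (hμint : Integrable μ) (hνint : Integrable ν)
    (hμ1 : ∫ u, μ u = 1) (hν1 : ∫ u, ν u = 1) :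
    ((1 - α) ^ 2 / 2) * (∫ u, |μ u - ν u|) ^ 2
        ≤ ∫ u, μ u * Real.log (μ u / (α * μ u + (1 - α) * ν u)) ∧
    (∫ u, μ u * Real.log (μ u / (α * μ u + (1 - α) * ν u)))
        ≤ ((1 - α) / α) * ∫ u, |μ u - ν u| := by
  obtain ⟨hα0, hα1⟩ := hα
  set σ : ℝ × ℝ → ℝ := fun u ↦ α * μ u + (1 - α) * ν u
  have hσ0 : ∀ u, 0 ≤ σ u := fun u ↦ by nlinarith [hμ0 u, hν0 u]
  have hμσ : ∀ u, σ u = 0 → μ u = 0 := fun u hu ↦ by nlinarith [hμ0 u, hν0 u]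
  have hσint : Integrable σ := (hμint.const_mul α).add (hνint.const_mul (1 - α))
  have hσ1 : ∫ u, σ u = 1 := by
    rw [integral_add (hμint.const_mul α) (hνint.const_mul (1 - α)), integral_const_mul,
      integral_const_mul, hμ1, hν1]
    ring
  have hupper : ∀ u, μ u * log (μ u / σ u) ≤ (1 - α) / α * |μ u - ν u| :=
    fun u ↦ mul_log_div_mix_le hα0 hα1.le (hμ0 u) (hν0 u)
  have hlog : Integrable (fun u ↦ μ u * log (μ u / σ u)) :=
    integrable_of_le_of_le (g₁ := fun u ↦ μ u - σ u)
      (hμint.aemeasurable.mul (hμint.aemeasurable.div hσint.aemeasurable).log).aestronglyMeasurable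
      (.of_forall fun u ↦ sub_le_mul_log_div (hμ0 u) (hσ0 u) (hμσ u))
      (.of_forall hupper) (hμint.sub hσint) (by fun_prop)
  have hmix : ∫ u, |μ u - σ u| = (1 - α) * ∫ u, |μ u - ν u| := by
    rw [← integral_const_mul]
    congr with u
    rw [show μ u - σ u = (1 - α) * (μ u - ν u) by ring, abs_mul, abs_of_pos (by linarith)]
  constructor
  · have := sq_integral_abs_sub_le_two_mul_integral_mul_log_div hμ0 hσ0 hμσ hμint hσint hμ1 hσ1
      hlog
    rw [hmix] at this
    linarith
  · rw [← integral_const_mul]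
    exact integral_mono hlog (by fun_prop) hupper
end

section
/- Let N : ℝ → ℝ be continuous, set ω(v) = N(v)/v for v ≠ 0, and suppose limsup_{|v|→∞} ω(v) = -∞ (super-linear confinement). Then for every R > 0 there exists a constant C > 0 such that for all real v and all V with |V| ≤ R, (v - V)(N(v) - N(V)) ≤ C |v - V|², provided N is C¹. -/
open Filter

/-- Super-linear confinement: if `N ∈ C¹` and `N(v)/v → -∞` as `|v| → ∞`, then for every
`R > 0` there is `C > 0` such that `(v - V)(N(v) - N(V)) ≤ C |v - V|²` whenever `|V| ≤ R`. -/
theorem stmt8 (N : ℝ → ℝ) (hN : ContDiff ℝ 1 N)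
    (hconf : Tendsto (fun v => N v / v) (cocompact ℝ) atBot) :
    ∀ R > (0 : ℝ), ∃ C > (0 : ℝ), ∀ v V : ℝ, |V| ≤ R →
      (v - V) * (N v - N V) ≤ C * |v - V| ^ 2 := by
  intro R hR
  -- bound of N on [-R, R]
  obtain ⟨B, hB⟩ := (isCompact_Icc (a := -R) (b := R)).exists_bound_of_continuousOn
    hN.continuous.continuousOn
  have hB0 : 0 ≤ B := le_trans (norm_nonneg _) (hB 0 (by constructor <;> linarith))
  -- confinement: on both tails
  rw [cocompact_eq_atBot_atTop, tendsto_sup] at hconf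
  obtain ⟨M₂, hM₂⟩ := eventually_atBot.mp (hconf.1.eventually (eventually_le_atBot (-(B + 1))))
  obtain ⟨M₁, hM₁⟩ := eventually_atTop.mp (hconf.2.eventually (eventually_le_atBot (-(B + 1))))
  set M : ℝ := max M₁ (max (-M₂) (max R 1)) with hM
  have hMR : R ≤ M := le_trans (le_max_left _ _) (le_max_of_le_right (le_max_right _ _))
  have hM1 : 1 ≤ M := le_max_of_le_right (le_max_of_le_right (le_max_right _ _))
  -- Lipschitz constant on [-M, M]
  obtain ⟨L, hL⟩ := (isCompact_Icc (a := -M) (b := M)).exists_bound_of_continuousOn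
    (hN.continuous_deriv le_rfl).continuousOn
  have hlip : ∀ x ∈ Set.Icc (-M) M, ∀ y ∈ Set.Icc (-M) M, ‖N y - N x‖ ≤ L * ‖y - x‖ := by
    intro x hx y hy
    exact (convex_Icc (-M) M).norm_image_sub_le_of_norm_deriv_le
      (fun z _ => hN.differentiable one_ne_zero z) hL hx hy
  refine ⟨max L 0 + 1, by positivity, fun v V hV => ?_⟩
  have hVN : ‖N V‖ ≤ B := hB V (abs_le.mp hV)
  have hVN' := abs_le.mp hVN
  have hV' := abs_le.mp hV
  rcases le_or_gt (|v|) M with hv | hv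
  · -- compact region
    have hv' := abs_le.mp hv
    have h1 : ‖N v - N V‖ ≤ L * ‖v - V‖ := by
      refine hlip V ⟨by linarith, by linarith⟩ v ⟨hv'.1, hv'.2⟩
    calc (v - V) * (N v - N V) ≤ |v - V| * |N v - N V| := by
          calc (v - V) * (N v - N V) ≤ |(v - V) * (N v - N V)| := le_abs_self _
          _ = |v - V| * |N v - N V| := abs_mul _ _
      _ ≤ |v - V| * (L * |v - V|) := by
          apply mul_le_mul_of_nonneg_left h1 (abs_nonneg _)
      _ ≤ (max L 0 + 1) * |v - V| ^ 2 := by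
          have : L ≤ max L 0 + 1 := le_trans (le_max_left _ _) (by linarith)
          nlinarith [abs_nonneg (v - V), sq_nonneg (v - V)]
  · -- tail region: product is nonpositive
    have hrhs : (0:ℝ) ≤ (max L 0 + 1) * |v - V| ^ 2 := by positivity
    rcases lt_abs.mp hv with hvpos | hvneg
    · -- v > M : N v ≤ -B ≤ N V, and v - V > 0
      have hv1 : (1:ℝ) ≤ v := le_trans hM1 hvpos.le
      have hNv : N v / v ≤ -(B + 1) := hM₁ v (le_trans (le_max_left _ _) hvpos.le)
      have hvpos' : (0:ℝ) < v := by linarith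
      have hNv' : N v ≤ -(B + 1) * v := by
        have := (div_le_iff₀ hvpos').mp hNv; linarith
      have hNvB : N v ≤ -B := by nlinarith
      have : N v - N V ≤ 0 := by linarith
      have hvV : 0 ≤ v - V := by linarith [le_trans hV'.2 hMR]
      nlinarith
    · -- -v > M i.e. v < -M
      have hvlt : v < -M := by linarith
      have hv1 : v ≤ -1 := by linarith
      have hNv : N v / v ≤ -(B + 1) := hM₂ v (by
        have : -M ≤ M₂ := by
          have : -M₂ ≤ M := le_max_of_le_right (le_max_left _ _); linarith
        linarith)
      have hvneg' : v < 0 := by linarith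
      have hNv' : -(B + 1) * v ≤ N v := by
        have := (div_le_iff_of_neg hvneg').mp hNv; linarith
      have hNvB : B ≤ N v := by nlinarith
      have h1 : 0 ≤ N v - N V := by linarith
      have hvV : v - V ≤ 0 := by linarith [hV'.1]
      nlinarith
end

section
/- Let N be C², let R > 0, and let μ be a probability measure on ℝ² with mean V = ∫ v dμ in first coordinate, with |V| ≤ R and finite 2p-th moments for some p ≥ 2, and suppose sup_{|v|≥1} |N(v)/v|/|v|^{p-1} < ∞. Then the error term E(μ) = ∫ N(v) dμ(v,w) - N(V) satisfies |E(μ)| ≤ C (D₂(μ) + D_p(μ)) where D_q(μ) = ∫ |v - V|^q dμ and C depends only on N, R and p. -/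
open MeasureTheory Real

/-- Error estimate for the nonlinearity: `|∫ N(v) dμ - N(V)| ≤ C (D₂(μ) + D_p(μ))` with a
constant depending only on `N`, `R` and `p`. -/
theorem stmt16 (N : ℝ → ℝ) (hN : ContDiff ℝ 2 N) (R : ℝ) (hR : 0 < R)
    (p : ℝ) (hp : 2 ≤ p)
    (hgrow : ∃ K : ℝ, ∀ v : ℝ, 1 ≤ |v| → |N v / v| / |v| ^ (p - 1) ≤ K) :
    ∃ C > (0 : ℝ), ∀ μ : Measure (ℝ × ℝ), IsProbabilityMeasure μ →
      Integrable (fun u : ℝ × ℝ => |u.1| ^ (2 * p)) μ →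
      |∫ u, u.1 ∂μ| ≤ R →
      |(∫ u, N u.1 ∂μ) - N (∫ u, u.1 ∂μ)|
        ≤ C * ((∫ u, |u.1 - ∫ u', u'.1 ∂μ| ^ 2 ∂μ)
            + ∫ u, |u.1 - ∫ u', u'.1 ∂μ| ^ p ∂μ) := by
  obtain ⟨K, hK⟩ := hgrow
  have hp1 : (1:ℝ) ≤ p := by linarith
  have hp0 : (0:ℝ) < p := by linarith
  have hK0 : 0 ≤ K := le_trans (by positivity) (hK 1 (by norm_num))
  -- growth bound in usable form
  have hNK : ∀ v : ℝ, 1 ≤ |v| → |N v| ≤ K * |v| ^ p := by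
    intro v hv
    have hv0 : (0:ℝ) < |v| := by linarith
    have h := (div_le_iff₀ (by positivity : (0:ℝ) < |v| ^ (p-1))).mp (hK v hv)
    rw [abs_div, div_le_iff₀ hv0] at h
    calc |N v| ≤ K * |v| ^ (p-1) * |v| := h
      _ = K * |v| ^ p := by
          rw [mul_assoc, ← Real.rpow_add_one hv0.ne', sub_add_cancel]
  -- differentiability facts
  have hNd : Differentiable ℝ N := hN.differentiable (by norm_num)
  have h2 : ContDiff ℝ ((1:ℕ∞)+1) N := by exact_mod_cast hN
  have hN'c : ContDiff ℝ 1 (deriv N) := ((contDiff_succ_iff_deriv).mp h2).2.2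
  have hN'd : Differentiable ℝ (deriv N) := hN'c.differentiable one_ne_zero
  have hN''c : Continuous (deriv (deriv N)) := by
    have h3 : ContDiff ℝ ((0:ℕ∞)+1) (deriv N) := by exact_mod_cast hN'c
    exact ((contDiff_succ_iff_deriv).mp h3).2.2.continuous
  -- compact bounds
  have hIc : IsCompact (Set.Icc (-(R+1)) (R+1)) := isCompact_Icc
  obtain ⟨M0, hM0⟩ : ∃ M, ∀ x ∈ Set.Icc (-(R+1)) (R+1), |N x| ≤ M := by
    obtain ⟨M, hM⟩ := hIc.exists_bound_of_continuousOn hN.continuous.continuousOn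
    exact ⟨M, fun x hx => by simpa using hM x hx⟩
  obtain ⟨M1, hM1⟩ : ∃ M, ∀ x ∈ Set.Icc (-(R+1)) (R+1), |deriv N x| ≤ M := by
    obtain ⟨M, hM⟩ := hIc.exists_bound_of_continuousOn hN'c.continuous.continuousOn
    exact ⟨M, fun x hx => by simpa using hM x hx⟩
  obtain ⟨M2, hM2⟩ : ∃ M, ∀ x ∈ Set.Icc (-(R+1)) (R+1), |deriv (deriv N) x| ≤ M := by
    obtain ⟨M, hM⟩ := hIc.exists_bound_of_continuousOn hN''c.continuousOn
    exact ⟨M, fun x hx => by simpa using hM x hx⟩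
  have h0I : (0:ℝ) ∈ Set.Icc (-(R+1)) (R+1) := by constructor <;> nlinarith
  have hM0n : 0 ≤ M0 := le_trans (abs_nonneg _) (hM0 0 h0I)
  have hM1n : 0 ≤ M1 := le_trans (abs_nonneg _) (hM1 0 h0I)
  have hM2n : 0 ≤ M2 := le_trans (abs_nonneg _) (hM2 0 h0I)
  set C0 : ℝ := M2 + 2*M0 + M1 + K * (R+1) ^ p with hC0def
  have hC0n : 0 ≤ C0 := by
    have : (0:ℝ) ≤ K * (R+1) ^ p := by positivity
    simp only [hC0def]; linarith
  refine ⟨C0 + 1, by linarith, ?_⟩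
  intro μ hμ hm hVR
  set V := ∫ u : ℝ × ℝ, u.1 ∂μ with hVdef
  have hVI : V ∈ Set.Icc (-(R+1)) (R+1) := by
    have := abs_le.mp hVR; constructor <;> linarith [this.1, this.2]
  -- Lipschitz bound for deriv N on the interval
  have lip : ∀ a ∈ Set.Icc (-(R+1)) (R+1), ∀ b ∈ Set.Icc (-(R+1)) (R+1),
      |deriv N b - deriv N a| ≤ M2 * |b - a| := by
    intro a ha b hb
    have := Convex.norm_image_sub_le_of_norm_deriv_le (f := deriv N)
      (fun x _ => (hN'd x))
      (fun x hx => by simpa [Real.norm_eq_abs] using hM2 x hx)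
      (convex_Icc _ _) ha hb
    simpa [Real.norm_eq_abs] using this
  -- derivative of the error function
  have hg : ∀ W t : ℝ, HasDerivAt (fun s => N s - N W - deriv N W * (s - W))
      (deriv N t - deriv N W) t := by
    intro W t
    have h1 := (hNd t).hasDerivAt
    have h2' : HasDerivAt (fun s : ℝ => N W + deriv N W * (s - W)) (deriv N W) t := by
      simpa using (((hasDerivAt_id t).sub_const W).const_mul (deriv N W)).const_add (N W)
    have := h1.sub h2'
    have heq : (fun s => N s - (N W + deriv N W * (s - W)))
        = (fun s => N s - N W - deriv N W * (s - W)) := by funext s; ring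
    rw [← heq]; exact this
  -- key pointwise bound
  have key : ∀ v : ℝ, |N v - N V - deriv N V * (v - V)|
      ≤ C0 * (|v - V| ^ 2 + |v - V| ^ p) := by
    clear hVdef hm hμ
    clear_value V
    intro v
    set r := |v - V| with hrdef
    have hr0 : 0 ≤ r := abs_nonneg _
    rcases le_or_gt r 1 with hle | hgt
    · -- Taylor regime
      have hsub : Set.Icc (V - r) (V + r) ⊆ Set.Icc (-(R+1)) (R+1) := by
        intro x hx
        obtain ⟨hx1, hx2⟩ := hx
        have hVb := abs_le.mp hVR
        constructor <;> linarith [hVb.1, hVb.2]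
      have hbound : ∀ x ∈ Set.Icc (V - r) (V + r),
          ‖deriv N x - deriv N V‖ ≤ M2 * r := by
        intro x hx
        have h1 := lip V hVI x (hsub hx)
        have : |x - V| ≤ r := by
          rw [abs_le]; obtain ⟨hx1, hx2⟩ := hx; constructor <;> linarith
        rw [Real.norm_eq_abs]
        calc |deriv N x - deriv N V| ≤ M2 * |x - V| := h1
          _ ≤ M2 * r := mul_le_mul_of_nonneg_left this hM2n
      have hVmem : V ∈ Set.Icc (V - r) (V + r) := by constructor <;> linarith
      have hvmem : v ∈ Set.Icc (V - r) (V + r) := by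
        have := abs_le.mp (le_of_eq hrdef.symm)
        constructor <;> [linarith [neg_abs_le (v - V)]; linarith [le_abs_self (v - V)]]
      have hmain := Convex.norm_image_sub_le_of_norm_deriv_le
        (f := fun s => N s - N V - deriv N V * (s - V))
        (fun x _ => (hg V x).differentiableAt)
        (fun x hx => by rw [(hg V x).deriv]; exact hbound x hx)
        (convex_Icc _ _) hVmem hvmem
      simp only [sub_self, mul_zero, sub_zero, Real.norm_eq_abs] at hmain
      have hmain' : |N v - N V - deriv N V * (v - V)| ≤ M2 * r * r := by
        simpa [← hrdef] using hmain
      have hrp : 0 ≤ r ^ p := Real.rpow_nonneg hr0 p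
      calc |N v - N V - deriv N V * (v - V)| ≤ M2 * r * r := hmain'
        _ = M2 * r ^ 2 := by ring
        _ ≤ C0 * (r ^ 2 + r ^ p) := by
            have hKR : (0:ℝ) ≤ K * (R+1)^p := by positivity
            have hA : (0:ℝ) ≤ (M2 + 2*M0 + M1 + K*(R+1)^p) * r ^ p :=
              mul_nonneg (by linarith) hrp
            have hB : (0:ℝ) ≤ (2*M0 + M1 + K*(R+1)^p) * r ^ 2 :=
              mul_nonneg (by linarith) (sq_nonneg r)
            rw [hC0def]; linarith
    · -- far regime
      have hr1 : (1:ℝ) ≤ r := hgt.le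
      have hrp1 : (1:ℝ) ≤ r ^ p := Real.one_le_rpow hr1 hp0.le
      have hrrp : r ≤ r ^ p := by
        calc r = r ^ (1:ℝ) := (Real.rpow_one r).symm
          _ ≤ r ^ p := Real.rpow_le_rpow_of_exponent_le hr1 hp1
      have hrp0 : 0 ≤ r ^ p := by linarith
      have t1 : |N V| ≤ M0 := hM0 V hVI
      have t2 : |deriv N V| ≤ M1 := hM1 V hVI
      have t3 : |N v| ≤ (M0 + K * (R+1) ^ p) * r ^ p := by
        rcases le_or_gt (|v|) 1 with hv1 | hv1
        · have hvI : v ∈ Set.Icc (-(R+1)) (R+1) := by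
            have := abs_le.mp hv1; constructor <;> nlinarith [this.1, this.2]
          have := hM0 v hvI
          have h1 : M0 ≤ M0 * r ^ p := le_mul_of_one_le_right hM0n hrp1
          have h2 : (0:ℝ) ≤ K * (R+1)^p * r^p := by positivity
          have h3 : (M0 + K * (R+1)^p) * r^p = M0 * r^p + K * (R+1)^p * r^p := by ring
          linarith
        · have hv' : |v| ≤ (R+1) * r := by
            have h1 : |v| ≤ |V| + |v - V| := by
              calc |v| = |V + (v - V)| := by ring_nf
                _ ≤ |V| + |v - V| := abs_add_le _ _
            have h2 : |V| ≤ R := hVR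
            nlinarith
          have h3 : |v| ^ p ≤ ((R+1) * r) ^ p :=
            Real.rpow_le_rpow (abs_nonneg v) hv' hp0.le
          have h4 : ((R+1) * r) ^ p = (R+1) ^ p * r ^ p :=
            Real.mul_rpow (by linarith) hr0
          have h5 := hNK v hv1.le
          have h6 : K * |v| ^ p ≤ K * ((R+1)^p * r^p) := by
            rw [← h4]; exact mul_le_mul_of_nonneg_left h3 hK0
          have h7 : (0:ℝ) ≤ M0 * r ^ p := by positivity
          have h8 : (M0 + K * (R+1)^p) * r^p = M0 * r^p + K * ((R+1)^p * r^p) := by ring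
          linarith
      have tri : |N v - N V - deriv N V * (v - V)|
          ≤ |N v| + |N V| + |deriv N V| * r := by
        calc |N v - N V - deriv N V * (v - V)|
            ≤ |N v - N V| + |deriv N V * (v - V)| := abs_sub _ _
          _ ≤ (|N v| + |N V|) + |deriv N V| * |v - V| := by
              gcongr; exacts [abs_sub _ _, le_of_eq (abs_mul _ _)]
          _ = |N v| + |N V| + |deriv N V| * r := by rw [← hrdef]
      have b1 : |N V| ≤ M0 * r ^ p := le_trans t1 (le_mul_of_one_le_right hM0n hrp1)
      have b2 : |deriv N V| * r ≤ M1 * r ^ p := mul_le_mul t2 hrrp hr0 hM1n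
      have hsq : 0 ≤ r ^ 2 := sq_nonneg r
      calc |N v - N V - deriv N V * (v - V)|
          ≤ (M0 + K * (R+1)^p) * r^p + M0 * r^p + M1 * r^p := by linarith
        _ ≤ C0 * (r ^ 2 + r ^ p) := by
            have hKR : (0:ℝ) ≤ K * (R+1)^p := by positivity
            have e1 : (M0 + K * (R+1)^p) * r^p + M0 * r^p + M1 * r^p
                = (2*M0 + M1 + K*(R+1)^p) * r^p := by ring
            have hA : (0:ℝ) ≤ M2 * r ^ p := mul_nonneg hM2n hrp0
            have hB : (0:ℝ) ≤ (M2 + 2*M0 + M1 + K*(R+1)^p) * r^2 :=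
              mul_nonneg (by linarith) hsq
            rw [e1, hC0def]; linarith
    -- end key
  -- integrability facts
  have h2p1 : (1:ℝ) ≤ 2 * p := by linarith
  have hmeas1 : AEStronglyMeasurable (fun u : ℝ × ℝ => u.1) μ :=
    (measurable_fst (α := ℝ) (β := ℝ)).aestronglyMeasurable
  have hint1 : Integrable (fun u : ℝ × ℝ => u.1) μ := by
    refine Integrable.mono' ((integrable_const (1:ℝ)).add hm) hmeas1 ?_
    filter_upwards with u
    rw [Real.norm_eq_abs]
    rcases le_or_gt (|u.1|) 1 with h | h
    · have h0 : (0:ℝ) ≤ |u.1| ^ (2*p) := Real.rpow_nonneg (abs_nonneg _) _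
      simp only [Pi.add_apply]; linarith
    · have h3 : |u.1| ≤ |u.1| ^ (2*p) := by
        calc |u.1| = |u.1| ^ (1:ℝ) := (Real.rpow_one _).symm
          _ ≤ |u.1| ^ (2*p) := Real.rpow_le_rpow_of_exponent_le h.le h2p1
      simp only [Pi.add_apply]; linarith
  have hintN : Integrable (fun u : ℝ × ℝ => N u.1) μ := by
    refine Integrable.mono' ((integrable_const M0).add (hm.const_mul K))
      ((hN.continuous.comp continuous_fst).aestronglyMeasurable) ?_
    filter_upwards with u
    rw [Real.norm_eq_abs]
    rcases le_or_gt (|u.1|) 1 with h | h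
    · have hI : u.1 ∈ Set.Icc (-(R+1)) (R+1) := by
        have := abs_le.mp h; constructor <;> nlinarith [this.1, this.2]
      have h1 := hM0 u.1 hI
      have h2 : (0:ℝ) ≤ K * |u.1| ^ (2*p) := by positivity
      simp only [Pi.add_apply]; linarith
    · have h1 := hNK u.1 h.le
      have h2 : |u.1| ^ p ≤ |u.1| ^ (2*p) :=
        Real.rpow_le_rpow_of_exponent_le h.le (by linarith)
      have h3 : K * |u.1| ^ p ≤ K * |u.1| ^ (2*p) :=
        mul_le_mul_of_nonneg_left h2 hK0
      simp only [Pi.add_apply]; linarith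
  have hmq : ∀ q : ℝ, 0 < q → q ≤ 2*p →
      Integrable (fun u : ℝ × ℝ => |u.1 - V| ^ q) μ := by
    intro q hq0 hq2
    refine Integrable.mono'
      ((integrable_const (1 + 2^(2*p) * R^(2*p))).add (hm.const_mul (2^(2*p)))) ?_ ?_
    · exact ((Real.continuous_rpow_const hq0.le).comp
        ((continuous_fst.sub continuous_const).abs)).aestronglyMeasurable
    · filter_upwards with u
      rw [Real.norm_eq_abs, abs_of_nonneg (Real.rpow_nonneg (abs_nonneg _) _)]
      have hRn : (0:ℝ) ≤ R := hR.le
      rcases le_or_gt (|u.1 - V|) 1 with h | h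
      · have h1 : |u.1 - V| ^ q ≤ 1 := Real.rpow_le_one (abs_nonneg _) h hq0.le
        have h2 : (0:ℝ) ≤ 2^(2*p) * R^(2*p) := by positivity
        have h3 : (0:ℝ) ≤ 2^(2*p) * |u.1| ^ (2*p) := by positivity
        simp only [Pi.add_apply]; linarith
      · have h1 : |u.1 - V| ^ q ≤ |u.1 - V| ^ (2*p) :=
          Real.rpow_le_rpow_of_exponent_le h.le hq2
        have h2 : |u.1 - V| ≤ 2 * max (|u.1|) R := by
          have : |u.1 - V| ≤ |u.1| + |V| := abs_sub _ _
          have hx := le_max_left (|u.1|) R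
          have hy := le_max_right (|u.1|) R
          linarith [hVR]
        have h3 : |u.1 - V| ^ (2*p) ≤ (2 * max (|u.1|) R) ^ (2*p) :=
          Real.rpow_le_rpow (abs_nonneg _) h2 (by linarith)
        have h4 : (2 * max (|u.1|) R) ^ (2*p) = 2^(2*p) * (max (|u.1|) R) ^ (2*p) :=
          Real.mul_rpow (by norm_num) (le_trans (abs_nonneg _) (le_max_left _ _))
        have h5 : (max (|u.1|) R) ^ (2*p) ≤ |u.1| ^ (2*p) + R ^ (2*p) := by
          rcases le_total (|u.1|) R with h' | h'
          · rw [max_eq_right h']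
            have : (0:ℝ) ≤ |u.1| ^ (2*p) := Real.rpow_nonneg (abs_nonneg _) _
            linarith
          · rw [max_eq_left h']
            have : (0:ℝ) ≤ R ^ (2*p) := Real.rpow_nonneg hRn _
            linarith
        have h6 : (0:ℝ) ≤ (2:ℝ)^(2*p) := Real.rpow_nonneg (by norm_num) _
        have h7 : 2^(2*p) * (max (|u.1|) R) ^ (2*p)
            ≤ 2^(2*p) * (|u.1| ^ (2*p) + R ^ (2*p)) := mul_le_mul_of_nonneg_left h5 h6
        simp only [Pi.add_apply]
        have h8 : (2:ℝ)^(2*p) * (|u.1| ^ (2*p) + R ^ (2*p))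
            = 2^(2*p) * R^(2*p) + 2^(2*p) * |u.1|^(2*p) := by ring
        linarith
  have hint2 : Integrable (fun u : ℝ × ℝ => |u.1 - V| ^ (2:ℕ)) μ := by
    have := hmq 2 (by norm_num) (by linarith)
    refine this.congr (Filter.Eventually.of_forall fun u => ?_)
    show |u.1 - V| ^ (2:ℝ) = |u.1 - V| ^ (2:ℕ)
    rw [show ((2:ℝ)) = ((2:ℕ):ℝ) by norm_num, Real.rpow_natCast]
  have hintp : Integrable (fun u : ℝ × ℝ => |u.1 - V| ^ p) μ := hmq p hp0 (by linarith)
  have hA : Integrable (fun u : ℝ × ℝ => N u.1 - N V) μ := hintN.sub (integrable_const _)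
  have hB0 : Integrable (fun u : ℝ × ℝ => u.1 - V) μ := hint1.sub (integrable_const _)
  have hB : Integrable (fun u : ℝ × ℝ => deriv N V * (u.1 - V)) μ := hB0.const_mul _
  have hintg : Integrable (fun u : ℝ × ℝ => N u.1 - N V - deriv N V * (u.1 - V)) μ :=
    hA.sub hB
  have hint2p : Integrable (fun u : ℝ × ℝ => |u.1 - V| ^ (2:ℕ) + |u.1 - V| ^ p) μ :=
    hint2.add hintp
  have hintC : Integrable (fun u : ℝ × ℝ => C0 * (|u.1 - V| ^ (2:ℕ) + |u.1 - V| ^ p)) μ :=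
    hint2p.const_mul C0
  -- value of the integral of g
  have hVint : ∫ u : ℝ × ℝ, (u.1 - V) ∂μ = 0 := by
    rw [integral_sub hint1 (integrable_const V), integral_const]
    simp [hVdef]
  have hsplit : ∫ u : ℝ × ℝ, (N u.1 - N V - deriv N V * (u.1 - V)) ∂μ
      = (∫ u : ℝ × ℝ, N u.1 ∂μ) - N V := by
    rw [integral_sub hA hB, integral_sub hintN (integrable_const (N V)),
      integral_const_mul, hVint, integral_const]
    simp
  -- main chain
  have habs : |∫ u : ℝ × ℝ, (N u.1 - N V - deriv N V * (u.1 - V)) ∂μ|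
      ≤ ∫ u : ℝ × ℝ, |N u.1 - N V - deriv N V * (u.1 - V)| ∂μ := by
    simpa [Real.norm_eq_abs] using
      norm_integral_le_integral_norm (μ := μ)
        (fun u : ℝ × ℝ => N u.1 - N V - deriv N V * (u.1 - V))
  have hmono : ∫ u : ℝ × ℝ, |N u.1 - N V - deriv N V * (u.1 - V)| ∂μ
      ≤ ∫ u : ℝ × ℝ, C0 * (|u.1 - V| ^ 2 + |u.1 - V| ^ p) ∂μ := by
    refine integral_mono hintg.abs hintC ?_
    intro u; exact key u.1
  have hval : ∫ u : ℝ × ℝ, C0 * (|u.1 - V| ^ 2 + |u.1 - V| ^ p) ∂μ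
      = C0 * ((∫ u : ℝ × ℝ, |u.1 - V| ^ 2 ∂μ) + ∫ u : ℝ × ℝ, |u.1 - V| ^ p ∂μ) := by
    rw [integral_const_mul, integral_add hint2 hintp]
  have hD2 : 0 ≤ ∫ u : ℝ × ℝ, |u.1 - V| ^ 2 ∂μ :=
    integral_nonneg fun u => by positivity
  have hDp : 0 ≤ ∫ u : ℝ × ℝ, |u.1 - V| ^ p ∂μ :=
    integral_nonneg fun u => Real.rpow_nonneg (abs_nonneg _) _
  calc |(∫ u : ℝ × ℝ, N u.1 ∂μ) - N V|
      = |∫ u : ℝ × ℝ, (N u.1 - N V - deriv N V * (u.1 - V)) ∂μ| := by rw [hsplit]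
    _ ≤ ∫ u : ℝ × ℝ, |N u.1 - N V - deriv N V * (u.1 - V)| ∂μ := habs
    _ ≤ ∫ u : ℝ × ℝ, C0 * (|u.1 - V| ^ 2 + |u.1 - V| ^ p) ∂μ := hmono
    _ = C0 * ((∫ u : ℝ × ℝ, |u.1 - V| ^ 2 ∂μ) + ∫ u : ℝ × ℝ, |u.1 - V| ^ p ∂μ) := hval
    _ ≤ (C0 + 1) * ((∫ u : ℝ × ℝ, |u.1 - V| ^ 2 ∂μ) + ∫ u : ℝ × ℝ, |u.1 - V| ^ p ∂μ) := by
        have h := add_nonneg hD2 hDp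
        have : C0 * ((∫ u : ℝ × ℝ, |u.1 - V| ^ 2 ∂μ) + ∫ u : ℝ × ℝ, |u.1 - V| ^ p ∂μ)
            + ((∫ u : ℝ × ℝ, |u.1 - V| ^ 2 ∂μ) + ∫ u : ℝ × ℝ, |u.1 - V| ^ p ∂μ)
            = (C0 + 1) * ((∫ u : ℝ × ℝ, |u.1 - V| ^ 2 ∂μ) + ∫ u : ℝ × ℝ, |u.1 - V| ^ p ∂μ) := by
          ring
        linarith
end
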